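/- arXiv:1309.2340 — 2 statements merged into one kernel-verified Lean document; each statement's English description precedes it below -/
import Mathlib

section
/- If U1, U2 ⊆ ℤ^d are bi-connected and boundary disjoint sets, then exactly one of the following three alternatives holds: (i) U1 ∩ U2 = ∅; (ii) U1^c ∩ U2^c = ∅; (iii) U1 ⊊ U2 or U2 ⊊ U1. -/
namespace P3C

def latticeGraph (d : ℕ) : SimpleGraph (Fin d → ℤ) where
  Adj v w := ∃ i, (w i = v i + 1 ∨ w i = v i - 1) ∧ ∀ j, j ≠ i → w j = v j
  symm := ⟨by
    rintro v w ⟨i, h1, h2⟩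
    exact ⟨i, by omega, fun j hj => (h2 j hj).symm⟩⟩
  loopless := ⟨by
    rintro v ⟨i, h1, _⟩
    omega⟩

def vplus (d : ℕ) (U : Set (Fin d → ℤ)) : Set (Fin d → ℤ) :=
  {u | u ∈ U ∨ ∃ w ∈ U, (latticeGraph d).Adj u w}

def vminus (d : ℕ) (U : Set (Fin d → ℤ)) : Set (Fin d → ℤ) :=
  {u | u ∈ U ∧ ∀ w, (latticeGraph d).Adj u w → w ∈ U}

def inBdry (d : ℕ) (U : Set (Fin d → ℤ)) : Set (Fin d → ℤ) := U \ vminus d U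

def outBdry (d : ℕ) (U : Set (Fin d → ℤ)) : Set (Fin d → ℤ) := vplus d U \ U

def ConnectedIn {V : Type*} (G : SimpleGraph V) (S : Set V) : Prop := (G.induce S).Connected

def BiConnected (d : ℕ) (U : Set (Fin d → ℤ)) : Prop :=
  U ≠ ∅ ∧ U ≠ Set.univ ∧ ConnectedIn (latticeGraph d) U ∧ ConnectedIn (latticeGraph d) Uᶜ

def edgeBdry (d : ℕ) (U : Set (Fin d → ℤ)) : Set ((Fin d → ℤ) × (Fin d → ℤ)) :=
  {p | (latticeGraph d).Adj p.1 p.2 ∧ ((p.1 ∈ U ∧ p.2 ∉ U) ∨ (p.2 ∈ U ∧ p.1 ∉ U))}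

def IsFourCycle (d : ℕ) (v00 v01 v11 v10 : Fin d → ℤ) : Prop :=
  (latticeGraph d).Adj v00 v01 ∧ (latticeGraph d).Adj v01 v11 ∧
  (latticeGraph d).Adj v11 v10 ∧ (latticeGraph d).Adj v10 v00 ∧ v00 ≠ v11 ∧ v01 ≠ v10

def BoundaryDisjoint (d : ℕ) (U1 U2 : Set (Fin d → ℤ)) : Prop :=
  edgeBdry d U1 ∩ edgeBdry d U2 = ∅ ∧
  ¬ ∃ v00 v01 v11 v10, IsFourCycle d v00 v01 v11 v10 ∧
    v00 ∈ U1ᶜ ∩ U2ᶜ ∧ v01 ∈ U1ᶜ ∩ U2 ∧ v11 ∈ U1 ∩ U2 ∧ v10 ∈ U1 ∩ U2ᶜ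

def translates (n d : ℕ) (U : Set (Fin d → ℤ)) : Set (Set (Fin d → ℤ)) :=
  {W | ∃ x : Fin d → ℤ, (∀ i, (n : ℤ) ∣ x i) ∧ W = (fun u => u + x) '' U}

def TranslationRespecting (n d : ℕ) (U : Set (Fin d → ℤ)) : Prop :=
  BiConnected d U ∧
  ∀ U1 ∈ translates n d U, ∀ U2 ∈ translates n d U, U1 ≠ U2 → BoundaryDisjoint d U1 U2

def TypeZero (n d : ℕ) (U : Set (Fin d → ℤ)) : Prop :=
  TranslationRespecting n d U ∧ (translates n d U).Nontrivial ∧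
  ∀ A ∈ translates n d U, ∀ B ∈ translates n d U, A ⊆ B ∨ B ⊆ A

noncomputable def setDist (d : ℕ) (A B : Set (Fin d → ℤ)) : ℕ :=
  sInf {k | ∃ a ∈ A, ∃ b ∈ B, (latticeGraph d).dist a b = k}

def IsLatticeHHF (d : ℕ) (h : (Fin d → ℤ) → ℤ) : Prop :=
  ∀ v w, (latticeGraph d).Adj v w → |h v - h w| = 1

def homZeroLattice (d : ℕ) : Set ((Fin d → ℤ) → ℤ) :=
  {h | IsLatticeHHF d h ∧ h 0 = 0}

def IsQP (n d : ℕ) (m : Fin d → ℤ) (h : (Fin d → ℤ) → ℤ) : Prop :=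
  h ∈ homZeroLattice d ∧ ∀ (v : Fin d → ℤ) (i : Fin d), h (v + Pi.single i (n : ℤ)) = h v + m i

def QPset (n d : ℕ) : Set ((Fin d → ℤ) → ℤ) :=
  {h | ∃ m : Fin d → ℤ, (∀ i, (6 : ℤ) ∣ m i ∧ |m i| ≤ (n : ℤ)) ∧ IsQP n d m h}

def compIn {V : Type*} (G : SimpleGraph V) (S : Set V) (u : V) : Set V :=
  {w | ∃ (hu : u ∈ S) (hw : w ∈ S), (G.induce S).Reachable ⟨u, hu⟩ ⟨w, hw⟩}

def subLL (d : ℕ) (h : (Fin d → ℤ) → ℤ) (k : ℤ) (u : Fin d → ℤ) : Set (Fin d → ℤ) :=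
  compIn (latticeGraph d) {w | h w ≠ k + 1} u

def subLC (d : ℕ) (h : (Fin d → ℤ) → ℤ) (k : ℤ) (u v : Fin d → ℤ) : Set (Fin d → ℤ) :=
  (compIn (latticeGraph d) (subLL d h k u)ᶜ v)ᶜ

def IsSublevelComponent (d : ℕ) (h : (Fin d → ℤ) → ℤ) (A : Set (Fin d → ℤ)) : Prop :=
  ∃ u v k, h u ≤ k ∧ k < h v ∧ A = subLC d h k u v

def sepComps (d : ℕ) (h : (Fin d → ℤ) → ℤ) (u v : Fin d → ℤ) : Set (Set (Fin d → ℤ)) :=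
  {A | IsSublevelComponent d h A ∧ u ∈ A ∧ v ∉ A}

def cycleEdge (d : ℕ) (v00 v01 v11 v10 : Fin d → ℤ) (e : (Fin d → ℤ) × (Fin d → ℤ)) : Prop :=
  ({e.1, e.2} : Set (Fin d → ℤ)) = {v00, v01} ∨ ({e.1, e.2} : Set (Fin d → ℤ)) = {v01, v11} ∨
  ({e.1, e.2} : Set (Fin d → ℤ)) = {v11, v10} ∨ ({e.1, e.2} : Set (Fin d → ℤ)) = {v10, v00}

def bdryGraph (d : ℕ) (U : Set (Fin d → ℤ)) : SimpleGraph (Fin d → ℤ) where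
  Adj u v := u ≠ v ∧ ∃ eu ev, eu ∈ edgeBdry d U ∧ ev ∈ edgeBdry d U ∧
    (u = eu.1 ∨ u = eu.2) ∧ (v = ev.1 ∨ v = ev.2) ∧
    ∃ a b c e, IsFourCycle d a b c e ∧ cycleEdge d a b c e eu ∧ cycleEdge d a b c e ev
  symm := ⟨by
    rintro u v ⟨hne, eu, ev, h1, h2, h3, h4, a, b, c, e, hc, hcu, hcv⟩
    exact ⟨hne.symm, ev, eu, h2, h1, h4, h3, a, b, c, e, hc, hcv, hcu⟩⟩
  loopless := ⟨fun u h => h.1 rfl⟩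

/-! Torus definitions -/

def torusAdj (n d : ℕ) (v w : Fin d → ZMod n) : Prop :=
  ∃ i, (w i = v i + 1 ∨ w i = v i - 1) ∧ ∀ j, j ≠ i → w j = v j

def IsProperColoring (n d : ℕ) (f : (Fin d → ZMod n) → Fin 3) : Prop :=
  ∀ v w, torusAdj n d v w → f v ≠ f w

def torusColorings (n d : ℕ) : Set ((Fin d → ZMod n) → Fin 3) :=
  {f | IsProperColoring n d f}

def colZero (n d : ℕ) : Set ((Fin d → ZMod n) → Fin 3) :=
  {f | IsProperColoring n d f ∧ f 0 = 0}

def IsTorusHHF (n d : ℕ) (h : (Fin d → ZMod n) → ℤ) : Prop :=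
  ∀ v w, torusAdj n d v w → |h v - h w| = 1

def torusHomZero (n d : ℕ) : Set ((Fin d → ZMod n) → ℤ) :=
  {h | IsTorusHHF n d h ∧ h 0 = 0}

noncomputable def cp (n d : ℕ) (par : ℕ) (k : Fin 3) (f : (Fin d → ZMod n) → Fin 3) : ℝ :=
  (Nat.card {v : Fin d → ZMod n | (∑ j, (v j).val) % 2 = par ∧ f v = k} : ℝ) /
  (Nat.card {v : Fin d → ZMod n | (∑ j, (v j).val) % 2 = par} : ℝ)

def latticeProj (n d : ℕ) (v : Fin d → ℤ) : Fin d → ZMod n := fun i => (v i : ZMod n)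

def toCol (n d : ℕ) (h : (Fin d → ℤ) → ℤ) (x : Fin d → ZMod n) : Fin 3 :=
  ⟨(h (fun i => ((x i).val : ℤ)) % 3).toNat, by
    have h1 : (0 : ℤ) ≤ h (fun i => ((x i).val : ℤ)) % 3 := Int.emod_nonneg _ (by norm_num)
    have h2 : h (fun i => ((x i).val : ℤ)) % 3 < 3 := Int.emod_lt_of_pos _ (by norm_num)
    omega⟩

end P3C

/-!
Number the quadrants `U1ᶜ ∩ U2ᶜ`, `U1ᶜ ∩ U2`, `U1 ∩ U2`, `U1 ∩ U2ᶜ` cyclically by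
`ZMod 4`. Boundary disjointness says exactly that along an edge this index changes by at most
`±1`, and that it never winds once around a unit square. Since the unit squares span all cycles
of `ℤ^d`, the index lifts to a height function `h : ℤ^d → ℤ` with `|h w - h v| ≤ 1` on edges.
On each of the connected sets `U1`, `U1ᶜ`, `U2`, `U2ᶜ` the values of `h` then stay in one
window `{4k + r, 4k + r + 1}`; if all four quadrants were nonempty, going once around them
through these windows would change `h` by `4`. The other alternatives are excluded by elementary
set arguments, using that `∂U ≠ ∅` when `∅ ≠ U ≠ ℤ^d`.
-/

namespace P3C

section Potential

variable {ι G : Type*} [DecidableEq ι] [AddCommGroup G]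

theorem exists_int_primitive (g : ℤ → G) :
    ∃ P : ℤ → G, P 0 = 0 ∧ ∀ t, P (t + 1) = P t + g t := by
  refine ⟨fun t => t.inductionOn' (motive := fun _ => G) 0 0 (fun k _ p => p + g k)
    (fun k _ p => p - g (k - 1)), Int.inductionOn'_self, fun t => ?_⟩
  rcases le_or_gt 0 t with ht | ht
  · exact Int.inductionOn'_add_one ht
  · have hpred := Int.inductionOn'_sub_one (motive := fun _ => G) (zero := 0)
      (succ := fun k _ p => p + g k) (pred := fun k _ p => p - g (k - 1))
      (show t + 1 ≤ 0 by omega)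
    simp only [add_sub_cancel_right] at hpred
    dsimp only
    rw [hpred, sub_add_cancel]

theorem primitive_sub_primitive_eq {f : ι → (ι → ℤ) → G}
    (hf : ∀ i j v, f i v + f j (v + Pi.single i 1) = f j v + f i (v + Pi.single j 1))
    {a i : ι} {b : ι → ℤ} {P Q : ℤ → G}
    (hP : ∀ t, P (t + 1) = P t + f a (b + Pi.single a t))
    (hQ : ∀ t, Q (t + 1) = Q t + f a (b + Pi.single i 1 + Pi.single a t)) (t : ℤ) :
    Q t - P t - f i (b + Pi.single a t) = Q 0 - P 0 - f i b := by
  have hper : Function.Periodic (fun t => Q t - P t - f i (b + Pi.single a t)) 1 := by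
    intro t
    set c := b + Pi.single a t
    have hca : b + Pi.single a (t + 1) = c + Pi.single a 1 := by rw [Pi.single_add, add_assoc]
    have hci : b + Pi.single i 1 + Pi.single a t = c + Pi.single i 1 := add_right_comm _ _ _
    simp only [hP, hQ, hca, hci, eq_sub_of_add_eq' (hf a i c)]
    abel
  simpa using hper.int_mul_eq t

theorem exists_potential_of_closed {f : ι → (ι → ℤ) → G}
    (hf : ∀ i j v, f i v + f j (v + Pi.single i 1) = f j v + f i (v + Pi.single j 1))
    (s : Finset ι) :
    ∃ h : (ι → ℤ) → G, ∀ i ∈ s, ∀ v, h (v + Pi.single i 1) = h v + f i v := by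
  induction s using Finset.induction_on with
  | empty => exact ⟨0, by simp⟩
  | insert a s ha ih =>
    obtain ⟨h, hh⟩ := ih
    choose P hP0 hP using fun b : ι → ℤ =>
      exists_int_primitive fun t => f a (b + Pi.single a t)
    -- integrate `f a` along the line through `v` in direction `a`, from the hyperplane `v a = 0`
    refine ⟨fun v => h (v - Pi.single a (v a)) + P (v - Pi.single a (v a)) (v a), ?_⟩
    rintro i hi v
    obtain rfl | ⟨hia, hi⟩ : i = a ∨ i ≠ a ∧ i ∈ s := by grind
    · dsimp only
      rw [Pi.add_apply, Pi.single_eq_same, Pi.single_add, add_sub_add_right_eq_sub, hP,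
        sub_add_cancel]
      abel
    · set b := v - Pi.single a (v a)
      have hline := primitive_sub_primitive_eq hf (hP b) (hP (b + Pi.single i 1)) (v a)
      simp only [b, sub_add_cancel, hP0, sub_zero, zero_sub] at hline
      dsimp only
      rw [Pi.add_apply, Pi.single_eq_of_ne' hia, add_zero, add_sub_right_comm, hh i hi]
      linear_combination (norm := module) hline

end Potential

theorem eq_of_reachable_of_forall_adj {V α : Type*} {G : SimpleGraph V} {φ : V → α}
    (hφ : ∀ x y, G.Adj x y → φ x = φ y) {x y : V} (h : G.Reachable x y) : φ x = φ y := by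
  obtain ⟨p⟩ := h
  induction p with
  | nil => rfl
  | cons hadj _ ih => exact (hφ _ _ hadj).trans ih

theorem ConnectedIn.eq_of_forall_adj {V α : Type*} {G : SimpleGraph V} {S : Set V}
    (hS : ConnectedIn G S) {φ : V → α}
    (hφ : ∀ x ∈ S, ∀ y ∈ S, G.Adj x y → φ x = φ y)
    {x y : V} (hx : x ∈ S) (hy : y ∈ S) : φ x = φ y :=
  eq_of_reachable_of_forall_adj (φ := fun z : S => φ z) (fun a b hab => hφ a a.2 b b.2 hab)
    (hS.preconnected ⟨x, hx⟩ ⟨y, hy⟩)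

section Lattice

variable {d : ℕ}

theorem latticeGraph_adj_add_single (v : Fin d → ℤ) (i : Fin d) :
    (latticeGraph d).Adj v (v + Pi.single i 1) :=
  ⟨i, Or.inl (by simp), fun j hj => by simp [hj]⟩

theorem latticeGraph_adj_iff {v w : Fin d → ℤ} :
    (latticeGraph d).Adj v w ↔ ∃ i, w = v + Pi.single i 1 ∨ v = w + Pi.single i 1 := by
  refine ⟨fun ⟨i, hi, hj⟩ => ⟨i, ?_⟩, ?_⟩
  · rcases hi with hi | hi
    · left
      funext k
      rcases eq_or_ne k i with rfl | hk <;> simp [*]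
    · right
      funext k
      rcases eq_or_ne k i with rfl | hk
      · simp [hi]
      · simp [hk, hj k hk]
  · rintro ⟨i, rfl | rfl⟩
    · exact latticeGraph_adj_add_single v i
    · exact (latticeGraph_adj_add_single w i).symm

theorem latticeGraph_reachable_add_single (v : Fin d → ℤ) (i : Fin d) (t : ℤ) :
    (latticeGraph d).Reachable v (v + Pi.single i t) := by
  induction t using Int.induction_on with
  | zero => simp
  | succ t ih =>
    rw [Pi.single_add, ← add_assoc]
    exact ih.trans (latticeGraph_adj_add_single _ i).reachable
  | pred t ih =>
    have hstep :=
      (latticeGraph_adj_add_single (v + Pi.single i (-(t : ℤ) - 1)) i).symm.reachable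
    rw [add_assoc, ← Pi.single_add, sub_add_cancel] at hstep
    exact ih.trans hstep

theorem latticeGraph_connected : (latticeGraph d).Connected := by
  refine .mk fun v w => ?_
  have key : ∀ s : Finset (Fin d),
      (latticeGraph d).Reachable v (v + ∑ i ∈ s, Pi.single i ((w - v) i)) := by
    intro s
    induction s using Finset.induction_on with
    | empty => simp
    | insert a s ha ih =>
      rw [Finset.sum_insert ha, add_comm (Pi.single a _), ← add_assoc]
      exact ih.trans (latticeGraph_reachable_add_single _ a _)
  simpa only [Finset.univ_sum_single, add_sub_cancel] using key Finset.univ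

theorem IsFourCycle.rotate {a b c e : Fin d → ℤ} (h : IsFourCycle d a b c e) :
    IsFourCycle d b c e a :=
  ⟨h.2.1, h.2.2.1, h.2.2.2.1, h.1, h.2.2.2.2.2, h.2.2.2.2.1.symm⟩

theorem IsFourCycle.reverse {a b c e : Fin d → ℤ} (h : IsFourCycle d a b c e) :
    IsFourCycle d a e c b :=
  ⟨h.2.2.2.1.symm, h.2.2.1.symm, h.2.1.symm, h.1.symm, h.2.2.2.2.1, h.2.2.2.2.2.symm⟩

theorem isFourCycle_square (v : Fin d → ℤ) {i j : Fin d} (hij : i ≠ j) :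
    IsFourCycle d v (v + Pi.single i 1) (v + Pi.single i 1 + Pi.single j 1)
      (v + Pi.single j 1) := by
  refine ⟨latticeGraph_adj_add_single _ _, latticeGraph_adj_add_single _ _, ?_,
    (latticeGraph_adj_add_single _ _).symm, fun h => ?_, fun h => ?_⟩
  · rw [add_right_comm]
    exact (latticeGraph_adj_add_single _ _).symm
  · simpa [hij] using congrFun h i
  · simpa [hij] using congrFun h i

theorem exists_latticeGraph_potential {G : Type*} [AddCommGroup G]
    (δ : (Fin d → ℤ) → (Fin d → ℤ) → G)
    (hanti : ∀ v w, (latticeGraph d).Adj v w → δ w v = -δ v w)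
    (hcycle : ∀ a b c e, IsFourCycle d a b c e → δ a b + δ b c + δ c e + δ e a = 0) :
    ∃ h : (Fin d → ℤ) → G, ∀ v w, (latticeGraph d).Adj v w → h w = h v + δ v w := by
  have hclosed : ∀ i j v,
      δ v (v + Pi.single i 1) + δ (v + Pi.single i 1) (v + Pi.single i 1 + Pi.single j 1) =
        δ v (v + Pi.single j 1) + δ (v + Pi.single j 1) (v + Pi.single j 1 + Pi.single i 1) := by
    intro i j v
    rcases eq_or_ne i j with rfl | hij
    · rfl
    have hsq := hcycle _ _ _ _ (isFourCycle_square v hij)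
    have hj := hanti _ _ (latticeGraph_adj_add_single v j)
    have hji := hanti _ _ (latticeGraph_adj_add_single (v + Pi.single j 1) i)
    rw [add_right_comm v (Pi.single j 1)] at hji ⊢
    rw [hj, hji] at hsq
    linear_combination (norm := module) hsq
  obtain ⟨h, hh⟩ := exists_potential_of_closed hclosed Finset.univ
  refine ⟨h, fun v w hvw => ?_⟩
  obtain ⟨i, rfl | rfl⟩ := latticeGraph_adj_iff.1 hvw
  · exact hh i (Finset.mem_univ _) v
  · rw [hh i (Finset.mem_univ _) w, hanti _ _ hvw.symm]
    abel

end Lattice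

section Quadrant

variable {α : Type*}

/- The quadrants are numbered so that the forbidden 4-cycles of `BoundaryDisjoint` are exactly
those along which `quadrant` increases by one at every step. -/
open Classical in
noncomputable def quadrant (U1 U2 : Set α) (x : α) : ZMod 4 :=
  if x ∈ U1 then (if x ∈ U2 then 2 else 3) else (if x ∈ U2 then 1 else 0)

variable {U1 U2 : Set α} {x y : α}

theorem mem_left_iff_quadrant : x ∈ U1 ↔ quadrant U1 U2 x = 2 ∨ quadrant U1 U2 x = 3 := by
  unfold quadrant; split_ifs <;> simp_all <;> decide

theorem mem_right_iff_quadrant : x ∈ U2 ↔ quadrant U1 U2 x = 1 ∨ quadrant U1 U2 x = 2 := by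
  unfold quadrant; split_ifs <;> simp_all <;> decide

theorem quadrant_sub_ne_two (h : (x ∈ U1 ↔ y ∈ U1) ∨ (x ∈ U2 ↔ y ∈ U2)) :
    quadrant U1 U2 y - quadrant U1 U2 x ≠ 2 := by
  unfold quadrant; split_ifs <;> simp_all <;> decide

end Quadrant

theorem ZMod.valMinAbs_neg_of_ne_two {x : ZMod 4} (hx : x ≠ 2) :
    (-x).valMinAbs = -x.valMinAbs := by
  revert x; decide

theorem ZMod.abs_valMinAbs_le_one {x : ZMod 4} (hx : x ≠ 2) : |x.valMinAbs| ≤ 1 := by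
  revert x; decide

theorem ZMod.valMinAbs_four_sum_eq_zero_or {x y z w : ZMod 4} (hx : x ≠ 2) (hy : y ≠ 2)
    (hz : z ≠ 2) (hw : w ≠ 2) (hsum : x + y + z + w = 0) :
    x.valMinAbs + y.valMinAbs + z.valMinAbs + w.valMinAbs = 0 ∨
      (x = 1 ∧ y = 1 ∧ z = 1 ∧ w = 1) ∨ (x = -1 ∧ y = -1 ∧ z = -1 ∧ w = -1) := by
  revert x y z w; decide

section Winding

variable {d : ℕ} {U1 U2 : Set (Fin d → ℤ)}

theorem quadrant_sub_ne_two_of_adj (hE : edgeBdry d U1 ∩ edgeBdry d U2 = ∅)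
    {v w : Fin d → ℤ} (hvw : (latticeGraph d).Adj v w) :
    quadrant U1 U2 w - quadrant U1 U2 v ≠ 2 := by
  refine quadrant_sub_ne_two (by_contra fun h => ?_)
  rw [not_or] at h
  exact Set.eq_empty_iff_forall_notMem.1 hE (v, w) ⟨⟨hvw, by tauto⟩, ⟨hvw, by tauto⟩⟩

theorem BoundaryDisjoint.not_quadrant_winding (hbd : BoundaryDisjoint d U1 U2)
    {a b c e : Fin d → ℤ} (hc : IsFourCycle d a b c e)
    (hab : quadrant U1 U2 b = quadrant U1 U2 a + 1)
    (hbc : quadrant U1 U2 c = quadrant U1 U2 b + 1)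
    (hce : quadrant U1 U2 e = quadrant U1 U2 c + 1) : False := by
  have forbidden : ∀ a b c e, IsFourCycle d a b c e → quadrant U1 U2 a = 0 →
      quadrant U1 U2 b = 1 → quadrant U1 U2 c = 2 → quadrant U1 U2 e = 3 → False := by
    intro a b c e hcyc ha hb hc he
    refine hbd.2 ⟨a, b, c, e, hcyc, ?_⟩
    simp only [Set.mem_inter_iff, Set.mem_compl_iff, mem_left_iff_quadrant (U1 := U1) (U2 := U2),
      mem_right_iff_quadrant (U1 := U1) (U2 := U2), ha, hb, hc, he]
    decide
  rw [hab] at hbc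
  rw [hbc] at hce
  obtain ha | ha | ha | ha : quadrant U1 U2 a = 0 ∨ quadrant U1 U2 a = 1 ∨
      quadrant U1 U2 a = 2 ∨ quadrant U1 U2 a = 3 := by
    generalize quadrant U1 U2 a = q
    revert q; decide
  all_goals rw [ha] at hab hbc hce
  · exact forbidden _ _ _ _ hc ha hab hbc hce
  · exact forbidden _ _ _ _ hc.rotate.rotate.rotate hce ha hab hbc
  · exact forbidden _ _ _ _ hc.rotate.rotate hbc hce ha hab
  · exact forbidden _ _ _ _ hc.rotate hab hbc hce ha

noncomputable def quadrantStep (U1 U2 : Set (Fin d → ℤ)) (v w : Fin d → ℤ) : ℤ :=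
  (quadrant U1 U2 w - quadrant U1 U2 v).valMinAbs

theorem quadrantStep_swap (hE : edgeBdry d U1 ∩ edgeBdry d U2 = ∅) {v w : Fin d → ℤ}
    (hvw : (latticeGraph d).Adj v w) : quadrantStep U1 U2 w v = -quadrantStep U1 U2 v w := by
  rw [quadrantStep, quadrantStep, ← neg_sub,
    ZMod.valMinAbs_neg_of_ne_two (quadrant_sub_ne_two_of_adj hE hvw)]

theorem BoundaryDisjoint.quadrantStep_cycle_sum (hbd : BoundaryDisjoint d U1 U2)
    {a b c e : Fin d → ℤ} (hc : IsFourCycle d a b c e) :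
    quadrantStep U1 U2 a b + quadrantStep U1 U2 b c + quadrantStep U1 U2 c e +
      quadrantStep U1 U2 e a = 0 := by
  have hne := fun {v w} (hvw : (latticeGraph d).Adj v w) => quadrant_sub_ne_two_of_adj hbd.1 hvw
  rcases ZMod.valMinAbs_four_sum_eq_zero_or (hne hc.1) (hne hc.2.1) (hne hc.2.2.1)
    (hne hc.2.2.2.1) (by ring) with hsum | ⟨h1, h2, h3, -⟩ | ⟨-, h2, h3, h4⟩
  · exact hsum
  · exact (hbd.not_quadrant_winding hc (sub_eq_iff_eq_add'.1 h1) (sub_eq_iff_eq_add'.1 h2)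
      (sub_eq_iff_eq_add'.1 h3)).elim
  · exact (hbd.not_quadrant_winding hc.reverse (by linear_combination -h4)
      (by linear_combination -h3) (by linear_combination -h2)).elim

theorem BoundaryDisjoint.exists_lift_quadrant (hbd : BoundaryDisjoint d U1 U2) :
    ∃ h : (Fin d → ℤ) → ℤ, (∀ v, (h v : ZMod 4) = quadrant U1 U2 v) ∧
      ∀ v w, (latticeGraph d).Adj v w → |h w - h v| ≤ 1 := by
  obtain ⟨h, hh⟩ := exists_latticeGraph_potential (quadrantStep U1 U2)
    (fun _ _ => quadrantStep_swap hbd.1) (fun _ _ _ _ => hbd.quadrantStep_cycle_sum)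
  have hconst : ∀ v w, (latticeGraph d).Adj v w →
      (h v : ZMod 4) - quadrant U1 U2 v = (h w : ZMod 4) - quadrant U1 U2 w := by
    intro v w hvw
    rw [hh v w hvw, Int.cast_add, quadrantStep, ZMod.coe_valMinAbs]
    ring
  refine ⟨fun v => h v - h 0 + (quadrant U1 U2 0).valMinAbs, fun v => ?_, fun v w hvw => ?_⟩
  · have := eq_of_reachable_of_forall_adj hconst (latticeGraph_connected.preconnected v 0)
    push_cast
    linear_combination this
  · simpa [hh v w hvw, quadrantStep] using
      ZMod.abs_valMinAbs_le_one (quadrant_sub_ne_two_of_adj hbd.1 hvw)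

theorem ediv_four_eq_of_connectedIn {S : Set (Fin d → ℤ)} (hS : ConnectedIn (latticeGraph d) S)
    {h : (Fin d → ℤ) → ℤ} (hlip : ∀ v w, (latticeGraph d).Adj v w → |h w - h v| ≤ 1)
    {r : ℤ} (hr : ∀ x ∈ S, (h x - r) % 4 ≤ 1) {x y : Fin d → ℤ} (hx : x ∈ S) (hy : y ∈ S) :
    (h x - r) / 4 = (h y - r) / 4 := by
  refine hS.eq_of_forall_adj (φ := fun v => (h v - r) / 4) (fun v hv w hw hvw => ?_) hx hy
  have := abs_le.1 (hlip v w hvw)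
  have := hr v hv
  have := hr w hw
  omega

theorem BoundaryDisjoint.not_all_quadrants_nonempty (hbd : BoundaryDisjoint d U1 U2)
    (hc1 : ConnectedIn (latticeGraph d) U1) (hc1c : ConnectedIn (latticeGraph d) U1ᶜ)
    (hc2 : ConnectedIn (latticeGraph d) U2) (hc2c : ConnectedIn (latticeGraph d) U2ᶜ) :
    ¬((U1 ∩ U2).Nonempty ∧ (U1 ∩ U2ᶜ).Nonempty ∧ (U1ᶜ ∩ U2).Nonempty ∧
      (U1ᶜ ∩ U2ᶜ).Nonempty) := by
  rintro ⟨⟨p11, h11⟩, ⟨p10, h10⟩, ⟨p01, h01⟩, ⟨p00, h00⟩⟩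
  obtain ⟨h, hlift, hlip⟩ := hbd.exists_lift_quadrant
  have hres : ∀ v, h v % 4 = (quadrant U1 U2 v).val := fun v => by
    rw [← hlift, ZMod.val_intCast]; rfl
  have hU1 : ∀ v, v ∈ U1 ↔ h v % 4 = 2 ∨ h v % 4 = 3 := fun v => by
    rw [mem_left_iff_quadrant (U2 := U2), hres]
    generalize quadrant U1 U2 v = q
    revert q; decide
  have hU2 : ∀ v, v ∈ U2 ↔ h v % 4 = 1 ∨ h v % 4 = 2 := fun v => by
    rw [mem_right_iff_quadrant (U1 := U1), hres]
    generalize quadrant U1 U2 v = q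
    revert q; decide
  have e1 := ediv_four_eq_of_connectedIn hc1 hlip (r := 2)
    (fun x hx => by rw [hU1] at hx; omega) h11.1 h10.1
  have e2 := ediv_four_eq_of_connectedIn hc1c hlip (r := 0)
    (fun x hx => by rw [Set.mem_compl_iff, hU1] at hx; omega) h01.1 h00.1
  have e3 := ediv_four_eq_of_connectedIn hc2 hlip (r := 1)
    (fun x hx => by rw [hU2] at hx; omega) h11.2 h01.2
  have e4 := ediv_four_eq_of_connectedIn hc2c hlip (r := 3)
    (fun x hx => by rw [Set.mem_compl_iff, hU2] at hx; omega) h10.2 h00.2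
  -- the windows force `h p01 = h p11 + 3` through `U1`, `U2ᶜ`, `U1ᶜ`, but `h p01 = h p11 - 1`
  -- inside `U2`
  simp only [Set.mem_inter_iff, Set.mem_compl_iff, hU1, hU2] at h11 h10 h01 h00
  omega

end Winding

theorem exactly_one_of_not_all_quadrants_nonempty {α : Type*} {U1 U2 : Set α}
    (h1 : U1.Nonempty) (h1' : U1 ≠ Set.univ) (h2 : U2.Nonempty) (h2' : U2 ≠ Set.univ)
    (hne : U2 ≠ U1) (hcompl : U2 ≠ U1ᶜ)
    (hq : ¬((U1 ∩ U2).Nonempty ∧ (U1 ∩ U2ᶜ).Nonempty ∧ (U1ᶜ ∩ U2).Nonempty ∧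
      (U1ᶜ ∩ U2ᶜ).Nonempty)) :
    (U1 ∩ U2 = ∅ ∧ ¬(U1ᶜ ∩ U2ᶜ = ∅) ∧ ¬(U1 ⊂ U2 ∨ U2 ⊂ U1)) ∨
    (¬(U1 ∩ U2 = ∅) ∧ U1ᶜ ∩ U2ᶜ = ∅ ∧ ¬(U1 ⊂ U2 ∨ U2 ⊂ U1)) ∨
    (¬(U1 ∩ U2 = ∅) ∧ ¬(U1ᶜ ∩ U2ᶜ = ∅) ∧ (U1 ⊂ U2 ∨ U2 ⊂ U1)) := by
  have hA : U1 ∩ U2 = ∅ → ¬(U1 ⊂ U2 ∨ U2 ⊂ U1) := by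
    rintro hA (h | h)
    · exact h1.ne_empty (by rwa [Set.inter_eq_left.2 h.subset] at hA)
    · exact h2.ne_empty (by rwa [Set.inter_eq_right.2 h.subset] at hA)
  have hB : U1ᶜ ∩ U2ᶜ = ∅ → ¬(U1 ⊂ U2 ∨ U2 ⊂ U1) := by
    rintro hB (h | h)
    · rw [Set.inter_eq_right.2 (Set.compl_subset_compl.2 h.subset)] at hB
      exact h2' (Set.compl_empty_iff.1 hB)
    · rw [Set.inter_eq_left.2 (Set.compl_subset_compl.2 h.subset)] at hB
      exact h1' (Set.compl_empty_iff.1 hB)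
  have hAB : ¬(U1 ∩ U2 = ∅ ∧ U1ᶜ ∩ U2ᶜ = ∅) := by
    rintro ⟨hA, hB⟩
    refine hcompl (Set.ext fun x => ?_)
    have := Set.eq_empty_iff_forall_notMem.1 hA x
    have := Set.eq_empty_iff_forall_notMem.1 hB x
    simp only [Set.mem_inter_iff, Set.mem_compl_iff] at *
    tauto
  have hC : U1 ∩ U2 ≠ ∅ → U1ᶜ ∩ U2ᶜ ≠ ∅ → U1 ⊂ U2 ∨ U2 ⊂ U1 := by
    intro hA hB
    rw [← Set.nonempty_iff_ne_empty] at hA hB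
    by_cases h12 : U1 ⊆ U2
    · exact .inl (h12.ssubset_of_ne hne.symm)
    obtain ⟨a, ha1, ha2⟩ := Set.not_subset.1 h12
    have h21 : U2 ⊆ U1 := fun x hx2 =>
      by_contra fun hx1 => hq ⟨hA, ⟨a, ha1, ha2⟩, ⟨x, hx1, hx2⟩, hB⟩
    exact .inr (h21.ssubset_of_ne hne)
  by_cases hA' : U1 ∩ U2 = ∅ <;> by_cases hB' : U1ᶜ ∩ U2ᶜ = ∅
  · exact (hAB ⟨hA', hB'⟩).elim
  · exact .inl ⟨hA', hB', hA hA'⟩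
  · exact .inr (.inl ⟨hA', hB', hB hB'⟩)
  · exact .inr (.inr ⟨hA', hB', hC hA' hB'⟩)

section EdgeBoundary

variable {d : ℕ}

theorem edgeBdry_compl (U : Set (Fin d → ℤ)) : edgeBdry d Uᶜ = edgeBdry d U := by
  ext p
  simp only [edgeBdry, Set.mem_ofPred_eq, Set.mem_compl_iff, not_not]
  tauto

theorem edgeBdry_nonempty {U : Set (Fin d → ℤ)} (hU : U.Nonempty) (hU' : U ≠ Set.univ) :
    (edgeBdry d U).Nonempty := by
  obtain ⟨x, hx⟩ := hU
  obtain ⟨y, hy⟩ := (Set.ne_univ_iff_exists_notMem U).1 hU'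
  obtain ⟨w⟩ := latticeGraph_connected.preconnected x y
  obtain ⟨e, -, he, he'⟩ := w.exists_boundary_dart U hx hy
  exact ⟨(e.fst, e.snd), e.adj, .inl ⟨he, he'⟩⟩

theorem BoundaryDisjoint.ne_and_ne_compl {U1 U2 : Set (Fin d → ℤ)}
    (hbd : BoundaryDisjoint d U1 U2) (hU : U1.Nonempty) (hU' : U1 ≠ Set.univ) :
    U2 ≠ U1 ∧ U2 ≠ U1ᶜ := by
  have hE := (edgeBdry_nonempty hU hU').ne_empty
  constructor <;> rintro rfl
  · exact hE (by simpa using hbd.1)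
  · exact hE (by simpa [edgeBdry_compl] using hbd.1)

end EdgeBoundary

end P3C

theorem stmt8 (d : ℕ) (U1 U2 : Set (Fin d → ℤ))
    (h1 : P3C.BiConnected d U1) (h2 : P3C.BiConnected d U2)
    (hbd : P3C.BoundaryDisjoint d U1 U2) :
    (U1 ∩ U2 = ∅ ∧ ¬(U1ᶜ ∩ U2ᶜ = ∅) ∧ ¬(U1 ⊂ U2 ∨ U2 ⊂ U1)) ∨
    (¬(U1 ∩ U2 = ∅) ∧ U1ᶜ ∩ U2ᶜ = ∅ ∧ ¬(U1 ⊂ U2 ∨ U2 ⊂ U1)) ∨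
    (¬(U1 ∩ U2 = ∅) ∧ ¬(U1ᶜ ∩ U2ᶜ = ∅) ∧ (U1 ⊂ U2 ∨ U2 ⊂ U1)) := by
  obtain ⟨hne1, hnu1, hc1, hc1c⟩ := h1
  obtain ⟨hne2, hnu2, hc2, hc2c⟩ := h2
  have hU1 := Set.nonempty_iff_ne_empty.2 hne1
  obtain ⟨hne, hcompl⟩ := hbd.ne_and_ne_compl hU1 hnu1
  exact P3C.exactly_one_of_not_all_quadrants_nonempty hU1 hnu1
    (Set.nonempty_iff_ne_empty.2 hne2) hnu2 hne hcompl
    (hbd.not_all_quadrants_nonempty hc1 hc1c hc2 hc2c)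
end

section
/- Let h ∈ hm(ℤ^d) and u, v ∈ ℤ^d. Then the family L_{(u,v)} of sublevel components of h separating u from v is finite and totally ordered by inclusion, and h(v) − h(u) = |L_{(u,v)}| − |L_{(v,u)}|. -/
/-!
Whatever the family `𝓛` of sets, `|𝓛(x, y)| - |𝓛(y, x)|`, with `𝓛(x, y)` the members containing
`x` but not `y`, is a sum over `𝓛` of `𝟙_A x - 𝟙_A y`, hence additive along paths as long as the
families involved are finite. For sublevel components of a height function, crossing an edge
upwards from `w` to `w'` leaves exactly one of them, `LC^{h w}(w, w')`, and none is crossed the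
other way, so the signed count changes by `h w' - h w` along every edge of the connected graph
`ℤ^d`.

Two sublevel components containing `u` but not `v` are nested: if the sublevel set of one meets the
other, an edge leaving the other inside it compares their levels; if neither meets the other, each
sublevel set sits in the region of `v` cut off by the other, and then `u` cannot avoid both regions.
-/

namespace P3C

open SimpleGraph

section Components

variable {V : Type*} {G : SimpleGraph V} {S T : Set V} {u w x : V}

lemma mem_compIn_iff : w ∈ compIn G S u ↔ ∃ q : G.Walk u w, ∀ z ∈ q.support, z ∈ S := by
  constructor
  · rintro ⟨hu, hw, ⟨p⟩⟩
    have hp : ∀ z ∈ (p.map (Embedding.induce S).toHom).support, z ∈ S := by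
      simp only [Walk.support_map, List.mem_map]
      rintro _ ⟨z, -, rfl⟩
      exact z.2
    exact ⟨_, hp⟩
  · rintro ⟨q, hq⟩
    exact ⟨_, _, ⟨q.induce S hq⟩⟩

lemma mem_compIn_self (hu : u ∈ S) : u ∈ compIn G S u :=
  mem_compIn_iff.2 ⟨.nil, by simpa using hu⟩

lemma compIn_subset : compIn G S u ⊆ S := fun _ ⟨_, hw, _⟩ => hw

lemma mem_compIn_symm (hw : w ∈ compIn G S u) : u ∈ compIn G S w := by
  obtain ⟨q, hq⟩ := mem_compIn_iff.1 hw
  exact mem_compIn_iff.2 ⟨q.reverse, by simpa using hq⟩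

lemma mem_compIn_trans (hw : w ∈ compIn G S u) (hx : x ∈ compIn G S w) :
    x ∈ compIn G S u := by
  obtain ⟨q, hq⟩ := mem_compIn_iff.1 hw
  obtain ⟨r, hr⟩ := mem_compIn_iff.1 hx
  refine mem_compIn_iff.2 ⟨q.append r, fun z hz => ?_⟩
  rcases Walk.mem_support_append_iff _ _ |>.1 hz with hz | hz
  exacts [hq z hz, hr z hz]

lemma compIn_eq_of_mem (hw : w ∈ compIn G S u) : compIn G S u = compIn G S w :=
  Set.ext fun _ => ⟨mem_compIn_trans (mem_compIn_symm hw), mem_compIn_trans hw⟩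

lemma mem_compIn_of_adj (hw : w ∈ compIn G S u) (hadj : G.Adj w x) (hx : x ∈ S) :
    x ∈ compIn G S u :=
  mem_compIn_trans hw (mem_compIn_iff.2 ⟨hadj.toWalk, by simp [compIn_subset hw, hx]⟩)

lemma mem_compIn_of_mem_support (q : G.Walk u w) (hq : ∀ z ∈ q.support, z ∈ S) {z : V}
    (hz : z ∈ q.support) : z ∈ compIn G S u := by
  classical
  exact mem_compIn_iff.2
    ⟨q.takeUntil z hz, fun y hy => hq y (q.support_takeUntil_subset_support hz hy)⟩

lemma compIn_subset_compIn (hT : compIn G S u ⊆ T) : compIn G S u ⊆ compIn G T u := by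
  intro w hw
  obtain ⟨q, hq⟩ := mem_compIn_iff.1 hw
  exact mem_compIn_iff.2 ⟨q, fun z hz => hT (mem_compIn_of_mem_support q hq hz)⟩

lemma exists_adj_of_mem_compIn {A : Set V} {y z : V} (hy : y ∈ compIn G S x)
    (hz : z ∈ compIn G S x) (hyA : y ∈ A) (hzA : z ∉ A) :
    ∃ p q, G.Adj p q ∧ p ∈ A ∧ q ∉ A ∧ p ∈ compIn G S x ∧ q ∈ compIn G S x := by
  obtain ⟨r, hr⟩ := mem_compIn_iff.1 (mem_compIn_trans (mem_compIn_symm hy) hz)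
  obtain ⟨e, he, hpA, hqA⟩ := r.exists_boundary_dart A hyA hzA
  rw [compIn_eq_of_mem hy]
  exact ⟨e.fst, e.snd, e.adj, hpA, hqA, mem_compIn_of_mem_support r hr
    (r.dart_fst_mem_support_of_mem_darts he), mem_compIn_of_mem_support r hr
    (r.dart_snd_mem_support_of_mem_darts he)⟩

/-- A path from `u` to `L₂` leaves the `L₂`-free component of `u` next to `L₂`, hence inside the
`L₁`-free component of `v`. -/
lemma mem_compIn_or_mem_compIn (hG : G.Preconnected) {L₁ L₂ : Set V} {v z : V}
    (h₂ : L₂ ⊆ compIn G L₁ᶜ v) (h₁ : L₁ ⊆ compIn G L₂ᶜ v) (hz : z ∈ L₂) (u : V) :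
    u ∈ compIn G L₁ᶜ v ∨ u ∈ compIn G L₂ᶜ v := by
  by_contra! hu
  obtain ⟨hu₁, hu₂⟩ := hu
  have huL₂ : u ∈ L₂ᶜ := fun h => hu₁ (h₂ h)
  have hD : compIn G L₂ᶜ u ⊆ L₁ᶜ := fun y hy hyL =>
    hu₂ (mem_compIn_trans (h₁ hyL) (mem_compIn_symm hy))
  obtain ⟨e, -, hp, hq⟩ := (hG u z).some.exists_boundary_dart (compIn G L₂ᶜ u)
    (mem_compIn_self huL₂) fun h => compIn_subset h hz
  have hqL₂ : e.snd ∈ L₂ := by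
    by_contra h
    exact hq (mem_compIn_of_adj hp e.adj h)
  have hp₁ : e.fst ∈ compIn G L₁ᶜ v := mem_compIn_of_adj (h₂ hqL₂) e.adj.symm (hD hp)
  exact hu₁ (mem_compIn_trans hp₁ (mem_compIn_symm (compIn_subset_compIn hD hp)))

end Components

section Separating

variable {α : Type*} (𝓛 : Set (Set α))

def separating (x y : α) : Set (Set α) := {A ∈ 𝓛 | x ∈ A ∧ y ∉ A}

noncomputable def sepIndex (x y : α) : ℤ := (separating 𝓛 x y).ncard - (separating 𝓛 y x).ncard

variable {𝓛} {x y z : α}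

@[simp] lemma separating_self : separating 𝓛 x x = ∅ :=
  Set.eq_empty_of_forall_notMem fun _ hA => hA.2.2 hA.2.1

lemma separating_subset_union : separating 𝓛 x z ⊆ separating 𝓛 x y ∪ separating 𝓛 y z := by
  rintro A ⟨hA, hx, hz⟩
  by_cases hy : y ∈ A
  exacts [Or.inr ⟨hA, hy, hz⟩, Or.inl ⟨hA, hx, hy⟩]

open Classical in
lemma ncard_separating_eq_sum {F : Set (Set α)} (hF : F.Finite) (hF𝓛 : F ⊆ 𝓛)
    (hsep : separating 𝓛 x y ⊆ F) :
    ((separating 𝓛 x y).ncard : ℤ) = ∑ A ∈ hF.toFinset, if x ∈ A ∧ y ∉ A then 1 else 0 := by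
  have hfilter : separating 𝓛 x y = ↑(hF.toFinset.filter fun A => x ∈ A ∧ y ∉ A) := by
    ext A
    simp only [Finset.coe_filter, Set.Finite.mem_toFinset, Set.mem_ofPred_eq]
    exact ⟨fun hA => ⟨hsep hA, hA.2⟩, fun hA => ⟨hF𝓛 hA.1, hA.2⟩⟩
  rw [hfilter, Set.ncard_coe_finset, Finset.sum_boole]

open Classical in
lemma sepIndex_eq_sum {F : Set (Set α)} (hF : F.Finite) (hF𝓛 : F ⊆ 𝓛)
    (hxy : separating 𝓛 x y ⊆ F) (hyx : separating 𝓛 y x ⊆ F) :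
    sepIndex 𝓛 x y = ∑ A ∈ hF.toFinset, ((if x ∈ A then 1 else 0) - if y ∈ A then 1 else 0) := by
  rw [sepIndex, ncard_separating_eq_sum hF hF𝓛 hxy, ncard_separating_eq_sum hF hF𝓛 hyx,
    ← Finset.sum_sub_distrib]
  refine Finset.sum_congr rfl fun A _ => ?_
  by_cases hx : x ∈ A <;> by_cases hy : y ∈ A <;> simp [hx, hy]

lemma sepIndex_add (hxy : (separating 𝓛 x y).Finite) (hyx : (separating 𝓛 y x).Finite)
    (hyz : (separating 𝓛 y z).Finite) (hzy : (separating 𝓛 z y).Finite) :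
    sepIndex 𝓛 x y + sepIndex 𝓛 y z = sepIndex 𝓛 x z := by
  set F := separating 𝓛 x y ∪ separating 𝓛 y x ∪ (separating 𝓛 y z ∪ separating 𝓛 z y)
  have hF : F.Finite := (hxy.union hyx).union (hyz.union hzy)
  have hF𝓛 : F ⊆ 𝓛 := by
    rintro A ((hA | hA) | hA | hA) <;> exact hA.1
  have hxz : separating 𝓛 x z ⊆ F := separating_subset_union.trans
    (Set.union_subset_union Set.subset_union_left Set.subset_union_left)
  have hzx : separating 𝓛 z x ⊆ F := separating_subset_union.trans
    (Set.union_subset (Set.subset_union_right.trans Set.subset_union_right)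
      (Set.subset_union_right.trans Set.subset_union_left))
  rw [sepIndex_eq_sum hF hF𝓛 (Set.subset_union_left.trans Set.subset_union_left)
      (Set.subset_union_right.trans Set.subset_union_left),
    sepIndex_eq_sum hF hF𝓛 (Set.subset_union_left.trans Set.subset_union_right)
      (Set.subset_union_right.trans Set.subset_union_right),
    sepIndex_eq_sum hF hF𝓛 hxz hzx, ← Finset.sum_add_distrib]
  exact Finset.sum_congr rfl fun _ _ => by ring

lemma sepIndex_eq_of_walk {f : α → ℤ} {G : SimpleGraph α}
    (hadj : ∀ a b, G.Adj a b → (separating 𝓛 a b).Finite ∧ (separating 𝓛 b a).Finite ∧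
      sepIndex 𝓛 a b = f b - f a) {a b : α} (q : G.Walk a b) :
    (separating 𝓛 a b).Finite ∧ (separating 𝓛 b a).Finite ∧ sepIndex 𝓛 a b = f b - f a := by
  induction q with
  | nil => simp [sepIndex]
  | @cons a c b hac _ ih =>
    obtain ⟨hcb, hbc, hidx⟩ := ih
    obtain ⟨hac', hca, hidx'⟩ := hadj a c hac
    refine ⟨(hac'.union hcb).subset separating_subset_union,
      (hbc.union hca).subset separating_subset_union, ?_⟩
    rw [← sepIndex_add hac' hca hcb hbc, hidx, hidx']
    ring

end Separating

section Lattice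

variable {d : ℕ}

lemma latticeGraph_adj_update (u : Fin d → ℤ) (i : Fin d) (t : ℤ) :
    (latticeGraph d).Adj (Function.update u i t) (Function.update u i (t + 1)) :=
  ⟨i, by simp, fun j hj => by simp [hj]⟩

lemma latticeGraph_reachable_update (u : Fin d → ℤ) (i : Fin d) (t : ℤ) :
    (latticeGraph d).Reachable u (Function.update u i t) := by
  have step : ∀ s t : ℤ, s ≤ t →
      (latticeGraph d).Reachable (Function.update u i s) (Function.update u i t) := by
    intro s t hst
    induction t, hst using Int.leInduction with
    | base => rfl
    | succ t _ ih => exact ih.trans (latticeGraph_adj_update u i t).reachable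
  rcases le_total (u i) t with h | h
  · simpa using step _ _ h
  · simpa using (step _ _ h).symm

lemma latticeGraph_preconnected : (latticeGraph d).Preconnected := by
  intro u v
  classical
  have key : ∀ s : Finset (Fin d), (latticeGraph d).Reachable u (s.piecewise v u) := by
    intro s
    induction s using Finset.induction_on with
    | empty => simp
    | insert i s _ ih =>
      rw [Finset.piecewise_insert]
      exact ih.trans (latticeGraph_reachable_update _ i (v i))
  simpa using key Finset.univ

end Lattice

section Sublevel

variable {d : ℕ} {h : (Fin d → ℤ) → ℤ} {k k₁ k₂ : ℤ} {u v w p q z u₁ u₂ : Fin d → ℤ}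

lemma IsLatticeHHF.eq_add_one_or_eq_sub_one (hh : IsLatticeHHF d h)
    (hadj : (latticeGraph d).Adj v w) : h w = h v + 1 ∨ h w = h v - 1 := by
  rcases (abs_eq zero_le_one).1 (hh v w hadj) with h₁ | h₁ <;> omega

lemma IsLatticeHHF.le_of_walk (hh : IsLatticeHHF d h) (q : (latticeGraph d).Walk v w)
    (hq : ∀ z ∈ q.support, h z ≠ k + 1) (hv : h v ≤ k) : h w ≤ k := by
  induction q with
  | nil => exact hv
  | @cons a b c hadj q ih =>
    have hb : h b ≠ k + 1 := hq b (by simp)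
    refine ih (fun z hz => hq z (by simp [hz])) ?_
    rcases hh.eq_add_one_or_eq_sub_one hadj with h₁ | h₁ <;> omega

lemma le_of_mem_subLL (hh : IsLatticeHHF d h) (hu : h u ≤ k) (hw : w ∈ subLL d h k u) :
    h w ≤ k :=
  let ⟨q, hq⟩ := mem_compIn_iff.1 hw
  hh.le_of_walk q hq hu

lemma self_mem_subLL (hu : h u ≤ k) : u ∈ subLL d h k u :=
  mem_compIn_self (show h u ≠ k + 1 by omega)

lemma subLL_eq_of_mem (hp : p ∈ subLL d h k u) : subLL d h k u = subLL d h k p :=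
  compIn_eq_of_mem hp

lemma subLL_subset_subLL_of_le (hh : IsLatticeHHF d h) (hp : h p ≤ k₁) (hk : k₁ ≤ k₂) :
    subLL d h k₁ p ⊆ subLL d h k₂ p :=
  compIn_subset_compIn fun w hw => show h w ≠ k₂ + 1 by
    have := le_of_mem_subLL hh hp hw
    omega

lemma subLL_subset_subLC : subLL d h k u ⊆ subLC d h k u v :=
  fun _ hw hC => compIn_subset hC hw

lemma self_mem_subLC (hu : h u ≤ k) : u ∈ subLC d h k u v :=
  subLL_subset_subLC (self_mem_subLL hu)

lemma not_mem_subLC_self (hh : IsLatticeHHF d h) (hu : h u ≤ k) (hv : k < h v) :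
    v ∉ subLC d h k u v := fun hA =>
  hA (mem_compIn_self fun hvL => by
    have := le_of_mem_subLL hh hu hvL
    omega)

lemma subLC_eq_of_not_mem (hv : v ∉ subLC d h k u w) : subLC d h k u w = subLC d h k u v :=
  congrArg compl (compIn_eq_of_mem (not_not.1 hv))

lemma subLC_eq_of_mem_subLL (hp : p ∈ subLL d h k u) : subLC d h k u v = subLC d h k p v := by
  rw [subLC, subLC, subLL_eq_of_mem hp]

lemma subLC_adj_boundary (hp : p ∈ subLC d h k u w) (hq : q ∉ subLC d h k u w)
    (hadj : (latticeGraph d).Adj p q) : p ∈ subLL d h k u ∧ h q = k + 1 := by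
  have hqC := not_not.1 hq
  have hpL : p ∈ subLL d h k u := by
    by_contra hpL
    exact hp (mem_compIn_of_adj hqC hadj.symm hpL)
  refine ⟨hpL, ?_⟩
  by_contra hqk
  exact compIn_subset hqC (mem_compIn_of_adj hpL hadj hqk)

lemma subLC_subset_of_subLL_subset (hL : subLL d h k₂ u₂ ⊆ subLC d h k₁ u₁ v) :
    subLC d h k₂ u₂ v ⊆ subLC d h k₁ u₁ v :=
  Set.compl_subset_compl.2 (compIn_subset_compIn (Set.subset_compl_comm.1 hL))

/-- Unless the second sublevel set lies inside the first component, it contains an edge leaving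
the first component; that edge sits at level `k₁ → k₁ + 1 ≤ k₂`, so the first sublevel set lies
inside the second. -/
lemma subLC_comparable_of_mem (hh : IsLatticeHHF d h) (h₁ : h u₁ ≤ k₁) (h₂ : h u₂ ≤ k₂)
    (hz : z ∈ subLL d h k₂ u₂) (hzA : z ∈ subLC d h k₁ u₁ v) :
    subLC d h k₁ u₁ v ⊆ subLC d h k₂ u₂ v ∨ subLC d h k₂ u₂ v ⊆ subLC d h k₁ u₁ v := by
  by_cases hL : subLL d h k₂ u₂ ⊆ subLC d h k₁ u₁ v
  · exact Or.inr (subLC_subset_of_subLL_subset hL)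
  obtain ⟨z', hz', hz'A⟩ := Set.not_subset.1 hL
  obtain ⟨p, q, hadj, hpA, hqA, hp, hq⟩ := exists_adj_of_mem_compIn hz hz' hzA hz'A
  obtain ⟨hpL, hqk⟩ := subLC_adj_boundary hpA hqA hadj
  have hq₂ : h q ≤ k₂ := le_of_mem_subLL hh h₂ hq
  refine Or.inl (subLC_subset_of_subLL_subset ?_)
  calc subLL d h k₁ u₁ = subLL d h k₁ p := subLL_eq_of_mem hpL
    _ ⊆ subLL d h k₂ p := subLL_subset_subLL_of_le hh (le_of_mem_subLL hh h₁ hpL) (by omega)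
    _ = subLL d h k₂ u₂ := (subLL_eq_of_mem hp).symm
    _ ⊆ subLC d h k₂ u₂ v := subLL_subset_subLC

lemma subLC_comparable (hh : IsLatticeHHF d h) (h₁ : h u₁ ≤ k₁) (h₂ : h u₂ ≤ k₂)
    (hu₁ : u ∈ subLC d h k₁ u₁ v) (hu₂ : u ∈ subLC d h k₂ u₂ v) :
    subLC d h k₁ u₁ v ⊆ subLC d h k₂ u₂ v ∨ subLC d h k₂ u₂ v ⊆ subLC d h k₁ u₁ v := by
  by_cases hA : subLL d h k₂ u₂ ⊆ compIn (latticeGraph d) (subLL d h k₁ u₁)ᶜ v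
  · by_cases hB : subLL d h k₁ u₁ ⊆ compIn (latticeGraph d) (subLL d h k₂ u₂)ᶜ v
    · exfalso
      exact (mem_compIn_or_mem_compIn latticeGraph_preconnected hA hB (self_mem_subLL h₂) u).elim
        hu₁ hu₂
    · obtain ⟨z, hz, hzB⟩ := Set.not_subset.1 hB
      exact (subLC_comparable_of_mem hh h₂ h₁ hz hzB).symm
  · obtain ⟨z, hz, hzA⟩ := Set.not_subset.1 hA
    exact subLC_comparable_of_mem hh h₁ h₂ hz hzA

lemma sepComps_comparable (hh : IsLatticeHHF d h) {A B : Set (Fin d → ℤ)}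
    (hA : A ∈ sepComps d h u v) (hB : B ∈ sepComps d h u v) : A ⊆ B ∨ B ⊆ A := by
  obtain ⟨⟨u₁, v₁, k₁, h₁, -, rfl⟩, huA, hvA⟩ := hA
  obtain ⟨⟨u₂, v₂, k₂, h₂, -, rfl⟩, huB, hvB⟩ := hB
  rw [subLC_eq_of_not_mem hvA] at huA ⊢
  rw [subLC_eq_of_not_mem hvB] at huB ⊢
  exact subLC_comparable hh h₁ h₂ huA huB

def sublevelComps (d : ℕ) (h : (Fin d → ℤ) → ℤ) : Set (Set (Fin d → ℤ)) :=
  {A | IsSublevelComponent d h A}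

lemma separating_sublevelComps : separating (sublevelComps d h) u v = sepComps d h u v := rfl

lemma sepComps_eq_singleton_of_adj (hh : IsLatticeHHF d h) (hadj : (latticeGraph d).Adj u v)
    (hv : h v = h u + 1) : sepComps d h u v = {subLC d h (h u) u v} := by
  ext A
  constructor
  · rintro ⟨⟨u', v', k, hu', -, rfl⟩, huA, hvA⟩
    obtain ⟨huL, hvk⟩ := subLC_adj_boundary huA hvA hadj
    obtain rfl : k = h u := by omega
    rw [Set.mem_singleton_iff, subLC_eq_of_not_mem hvA, subLC_eq_of_mem_subLL huL]
  · rintro rfl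
    exact ⟨⟨u, v, h u, le_rfl, by omega, rfl⟩, self_mem_subLC le_rfl,
      not_mem_subLC_self hh le_rfl (by omega)⟩

lemma sepComps_eq_empty_of_adj (hh : IsLatticeHHF d h) (hadj : (latticeGraph d).Adj u v)
    (hv : h v = h u - 1) : sepComps d h u v = ∅ := by
  refine Set.eq_empty_of_forall_notMem ?_
  rintro _ ⟨⟨u', v', k, hu', -, rfl⟩, huA, hvA⟩
  obtain ⟨huL, hvk⟩ := subLC_adj_boundary huA hvA hadj
  have := le_of_mem_subLL hh hu' huL
  omega

lemma sepIndex_of_adj (hh : IsLatticeHHF d h) (hadj : (latticeGraph d).Adj u v) :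
    (separating (sublevelComps d h) u v).Finite ∧ (separating (sublevelComps d h) v u).Finite ∧
      sepIndex (sublevelComps d h) u v = h v - h u := by
  simp only [sepIndex, separating_sublevelComps]
  rcases hh.eq_add_one_or_eq_sub_one hadj with hv | hv
  · rw [sepComps_eq_singleton_of_adj hh hadj hv, sepComps_eq_empty_of_adj hh hadj.symm (by omega)]
    simp [hv]
  · rw [sepComps_eq_empty_of_adj hh hadj hv, sepComps_eq_singleton_of_adj hh hadj.symm (by omega)]
    simp [hv]

end Sublevel

end P3C

theorem stmt17 (d : ℕ) (h : (Fin d → ℤ) → ℤ) (hh : h ∈ P3C.homZeroLattice d)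
    (u v : Fin d → ℤ) :
    (P3C.sepComps d h u v).Finite ∧
    (∀ A ∈ P3C.sepComps d h u v, ∀ B ∈ P3C.sepComps d h u v, A ⊆ B ∨ B ⊆ A) ∧
    h v - h u = (Nat.card ↥(P3C.sepComps d h u v) : ℤ) - (Nat.card ↥(P3C.sepComps d h v u) : ℤ) := by
  obtain ⟨hfin, -, hidx⟩ := P3C.sepIndex_eq_of_walk (fun _ _ => P3C.sepIndex_of_adj hh.1)
    (P3C.latticeGraph_preconnected u v).some
  refine ⟨hfin, fun A hA B hB => P3C.sepComps_comparable hh.1 hA hB, ?_⟩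
  rw [Nat.card_coe_set_eq, Nat.card_coe_set_eq, ← hidx]
  rfl
end
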